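/- arXiv:1512.00673 — 2 statements merged into one kernel-verified Lean document; each statement's English description precedes it below -/
import Mathlib

section
/- Beltrami identity for the conjugate pair, form (i): let 1 < p < ∞, let Ω ⊆ ℝ² be open, A : Ω → ℝ, and let v, w : Ω → ℝ be differentiable at a point z ∈ Ω and satisfy at z: ∂_x w = −s·∂_y v and ∂_y w = s·∂_x v, where s := A(z)|∇v(z)|^{p−2} if ∇v(z) ≠ 0 and s := 0 otherwise. Define F := v + i w : Ω → ℂ, ∂F/∂z := ½(∂_x F − i ∂_y F) and ∂F/∂z̄ := ½(∂_x F + i ∂_y F), evaluated at z. Then (1 + s)·(∂F/∂z̄)(z) = (1 − s)·conj((∂F/∂z)(z)); in particular, when 1 + s ≠ 0, (∂F/∂z̄)(z) = ((1−s)/(1+s))·conj((∂F/∂z)(z)). -/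
/-!
Write `a + b i` for the complex gradient `∂ₓv + i ∂_yv`. The first-order conditions say that
`(∂ₓw, ∂_yw)` is `s` times the gradient of `v` turned by a right angle, and substituting them
into the Wirtinger derivatives of `F = v + i w` gives `∂F/∂z̄ = ((1 - s)/2)(a + b i)` and
`conj (∂F/∂z) = ((1 + s)/2)(a + b i)`: both are real multiples of the same complex number.
-/

open Complex ComplexConjugate

theorem fderiv_ofReal_add_ofReal_mul_I {E : Type*} [NormedAddCommGroup E] [NormedSpace ℝ E]
    {v w : E → ℝ} {x : E} (hv : DifferentiableAt ℝ v x) (hw : DifferentiableAt ℝ w x) (h : E) :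
    fderiv ℝ (fun ζ => (v ζ : ℂ) + (w ζ : ℂ) * I) x h = fderiv ℝ v x h + fderiv ℝ w x h * I := by
  have hv' : HasFDerivAt (fun ζ => (v ζ : ℂ)) (ofRealCLM.comp (fderiv ℝ v x)) x :=
    ofRealCLM.hasFDerivAt.comp x hv.hasFDerivAt
  have hw' : HasFDerivAt (fun ζ => (w ζ : ℂ)) (ofRealCLM.comp (fderiv ℝ w x)) x :=
    ofRealCLM.hasFDerivAt.comp x hw.hasFDerivAt
  have hF : HasFDerivAt (fun ζ => (v ζ : ℂ) + (w ζ : ℂ) * I) _ x := hv'.add (hw'.mul_const I)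
  rw [hF.fderiv]
  simp [mul_comm]

theorem half_add_I_mul_of_rotated_partials (a b s : ℝ) :
    (1 / 2 : ℂ) * ((a + (-s * b : ℝ) * I) + I * (b + (s * a : ℝ) * I)) =
      ((1 - s) / 2 : ℝ) * (a + b * I) := by
  push_cast
  ring_nf
  rw [I_sq]
  ring

theorem conj_half_sub_I_mul_of_rotated_partials (a b s : ℝ) :
    conj ((1 / 2 : ℂ) * ((a + (-s * b : ℝ) * I) - I * (b + (s * a : ℝ) * I))) =
      ((1 + s) / 2 : ℝ) * (a + b * I) := by
  simp only [map_mul, map_add, map_sub, conj_ofReal, conj_I, map_div₀, map_one, map_ofNat]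
  push_cast
  ring_nf
  rw [I_sq]
  ring

theorem beltrami_identity_i_general (v w : ℂ → ℝ) (z : ℂ)
    (hv : DifferentiableAt ℝ v z) (hw : DifferentiableAt ℝ w z)
    (s : ℝ)
    (hwx : fderiv ℝ w z 1 = -s * fderiv ℝ v z Complex.I)
    (hwy : fderiv ℝ w z Complex.I = s * fderiv ℝ v z 1) :
    let F : ℂ → ℂ := fun ζ => (v ζ : ℂ) + (w ζ : ℂ) * Complex.I
    let Fz : ℂ := (1 / 2) * (fderiv ℝ F z 1 - Complex.I * fderiv ℝ F z Complex.I)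
    let Fzbar : ℂ := (1 / 2) * (fderiv ℝ F z 1 + Complex.I * fderiv ℝ F z Complex.I)
    ((1 + s : ℝ) : ℂ) * Fzbar = ((1 - s : ℝ) : ℂ) * (starRingEnd ℂ) Fz ∧
      (1 + s ≠ 0 → Fzbar = (((1 - s) / (1 + s) : ℝ) : ℂ) * (starRingEnd ℂ) Fz) := by
  intro F Fz Fzbar
  have hFzbar : Fzbar = ((1 - s) / 2 : ℝ) * (fderiv ℝ v z 1 + fderiv ℝ v z I * I) := by
    simp only [Fzbar, F, fderiv_ofReal_add_ofReal_mul_I hv hw, hwx, hwy]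
    exact half_add_I_mul_of_rotated_partials _ _ _
  have hFz : conj Fz = ((1 + s) / 2 : ℝ) * (fderiv ℝ v z 1 + fderiv ℝ v z I * I) := by
    simp only [Fz, F, fderiv_ofReal_add_ofReal_mul_I hv hw, hwx, hwy]
    exact conj_half_sub_I_mul_of_rotated_partials _ _ _
  have key : ((1 + s : ℝ) : ℂ) * Fzbar = ((1 - s : ℝ) : ℂ) * conj Fz := by
    rw [hFzbar, hFz]
    push_cast
    ring
  refine ⟨key, fun hs => ?_⟩
  rw [ofReal_div, div_mul_eq_mul_div, eq_div_iff (ofReal_ne_zero.mpr hs)]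
  linear_combination key

/-- Beltrami identity for the conjugate pair, form (i). With
`s = A(z)|∇v(z)|^{p-2}` (and `s = 0` when `∇v(z) = 0`), if at `z` one has
`∂ₓw = -s·∂_yv` and `∂_yw = s·∂ₓv`, then for `F = v + iw`:
`(1+s)·∂F/∂z̄ = (1-s)·conj(∂F/∂z)`, and when `1+s ≠ 0`,
`∂F/∂z̄ = ((1-s)/(1+s))·conj(∂F/∂z)`. -/
theorem beltrami_identity_i (p : ℝ) (hp : 1 < p)
    (Ω : Set ℂ) (hΩ : IsOpen Ω) (A : ℂ → ℝ) (v w : ℂ → ℝ) (z : ℂ) (hz : z ∈ Ω)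
    (hv : DifferentiableAt ℝ v z) (hw : DifferentiableAt ℝ w z)
    (s : ℝ)
    (hs : s = if fderiv ℝ v z 1 = 0 ∧ fderiv ℝ v z Complex.I = 0 then 0
      else A z * Real.sqrt ((fderiv ℝ v z 1) ^ 2 + (fderiv ℝ v z Complex.I) ^ 2) ^ (p - 2))
    (hwx : fderiv ℝ w z 1 = -s * fderiv ℝ v z Complex.I)
    (hwy : fderiv ℝ w z Complex.I = s * fderiv ℝ v z 1) :
    let F : ℂ → ℂ := fun ζ => (v ζ : ℂ) + (w ζ : ℂ) * Complex.I
    let Fz : ℂ := (1 / 2) * (fderiv ℝ F z 1 - Complex.I * fderiv ℝ F z Complex.I)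
    let Fzbar : ℂ := (1 / 2) * (fderiv ℝ F z 1 + Complex.I * fderiv ℝ F z Complex.I)
    ((1 + s : ℝ) : ℂ) * Fzbar = ((1 - s : ℝ) : ℂ) * (starRingEnd ℂ) Fz ∧
      (1 + s ≠ 0 → Fzbar = (((1 - s) / (1 + s) : ℝ) : ℂ) * (starRingEnd ℂ) Fz) :=
  beltrami_identity_i_general v w z hv hw s hwx hwy
end

section
/- Beltrami identity for the conjugate pair, form (ii): let 1 < p < ∞, let Ω ⊆ ℝ² be open, A : Ω → ℝ, and let v, w : Ω → ℝ be differentiable at a point z ∈ Ω. Suppose f := ∂_x v(z) − i ∂_y v(z) ≠ 0 and that at z: ∂_x w = −A(z)|f|^{p−2}·∂_y v and ∂_y w = A(z)|f|^{p−2}·∂_x v. Define F := v + i w : Ω → ℂ, ∂F/∂z := ½(∂_x F − i ∂_y F) and ∂F/∂z̄ := ½(∂_x F + i ∂_y F), evaluated at z. Then f·(1 + A(z)|f|^{p−2})·(∂F/∂z̄)(z) = (1 − A(z)|f|^{p−2})·conj(f)·(∂F/∂z)(z). -/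
/-!
With `k = A(z)|f|^{p-2}`, the hypotheses read `∂ₓw = -k ∂ᵧv` and `∂ᵧw = k ∂ₓv`, and for
`F = v + i w` both Wirtinger derivatives are multiples of `f = ∂ₓv - i ∂ᵧv`:
`∂F/∂z = (1 + k)/2 · f` and `∂F/∂z̄ = (1 - k)/2 · conj f`.
Multiplying the second by `f (1 + k)` and the first by `(1 - k) conj f` gives the same
product `(1 + k)(1 - k) |f|² / 2`.
-/

open Complex

theorem fderiv_ofReal_add_ofReal_mul_I_apply {E : Type*} [NormedAddCommGroup E]
    [NormedSpace ℝ E] {v w : E → ℝ} {z : E} (hv : DifferentiableAt ℝ v z)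
    (hw : DifferentiableAt ℝ w z) (u : E) :
    fderiv ℝ (fun ζ => (v ζ : ℂ) + (w ζ : ℂ) * I) z u
      = (fderiv ℝ v z u : ℂ) + (fderiv ℝ w z u : ℂ) * I := by
  have hF : HasFDerivAt (fun ζ => (v ζ : ℂ) + (w ζ : ℂ) * I) _ z :=
    (ofRealCLM.hasFDerivAt.comp z hv.hasFDerivAt).add
      ((ofRealCLM.hasFDerivAt.comp z hw.hasFDerivAt).mul_const I)
  rw [hF.fderiv]
  simp [mul_comm]

section

variable {v w : ℂ → ℝ} {z : ℂ} {k : ℝ}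

local notation "F" => fun ζ => (v ζ : ℂ) + (w ζ : ℂ) * I

theorem wirtinger_z_eq_of_conjugate_pair (hv : DifferentiableAt ℝ v z)
    (hw : DifferentiableAt ℝ w z) (hwx : fderiv ℝ w z 1 = -(k * fderiv ℝ v z I))
    (hwy : fderiv ℝ w z I = k * fderiv ℝ v z 1) :
    (1 / 2) * (fderiv ℝ F z 1 - I * fderiv ℝ F z I)
      = (1 + k) / 2 * ((fderiv ℝ v z 1 : ℂ) - (fderiv ℝ v z I : ℂ) * I) := by
  simp only [fderiv_ofReal_add_ofReal_mul_I_apply hv hw, hwx, hwy]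
  push_cast
  linear_combination (-(fderiv ℝ v z 1 * k / 2) : ℂ) * I_sq

theorem wirtinger_zbar_eq_of_conjugate_pair (hv : DifferentiableAt ℝ v z)
    (hw : DifferentiableAt ℝ w z) (hwx : fderiv ℝ w z 1 = -(k * fderiv ℝ v z I))
    (hwy : fderiv ℝ w z I = k * fderiv ℝ v z 1) :
    (1 / 2) * (fderiv ℝ F z 1 + I * fderiv ℝ F z I)
      = (1 - k) / 2 *
        (starRingEnd ℂ) ((fderiv ℝ v z 1 : ℂ) - (fderiv ℝ v z I : ℂ) * I) := by
  simp only [fderiv_ofReal_add_ofReal_mul_I_apply hv hw, hwx, hwy, map_sub, map_mul,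
    conj_ofReal, conj_I]
  push_cast
  linear_combination (fderiv ℝ v z 1 * k / 2 : ℂ) * I_sq

end

theorem beltrami_identity_ii_general (p : ℝ)
    (A : ℂ → ℝ) (v w : ℂ → ℝ) (z : ℂ)
    (hv : DifferentiableAt ℝ v z) (hw : DifferentiableAt ℝ w z)
    (f : ℂ)
    (hf : f = ((fderiv ℝ v z 1 : ℝ) : ℂ) - ((fderiv ℝ v z Complex.I : ℝ) : ℂ) * Complex.I)
    (hwx : fderiv ℝ w z 1 = -(A z * ‖f‖ ^ (p - 2) * fderiv ℝ v z Complex.I))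
    (hwy : fderiv ℝ w z Complex.I = A z * ‖f‖ ^ (p - 2) * fderiv ℝ v z 1) :
    let F : ℂ → ℂ := fun ζ => (v ζ : ℂ) + (w ζ : ℂ) * Complex.I
    let Fz : ℂ := (1 / 2) * (fderiv ℝ F z 1 - Complex.I * fderiv ℝ F z Complex.I)
    let Fzbar : ℂ := (1 / 2) * (fderiv ℝ F z 1 + Complex.I * fderiv ℝ F z Complex.I)
    f * ((1 + A z * ‖f‖ ^ (p - 2) : ℝ) : ℂ) * Fzbar
      = ((1 - A z * ‖f‖ ^ (p - 2) : ℝ) : ℂ) * (starRingEnd ℂ) f * Fz := by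
  intro F Fz Fzbar
  rw [show Fz = _ from wirtinger_z_eq_of_conjugate_pair hv hw hwx hwy,
    show Fzbar = _ from wirtinger_zbar_eq_of_conjugate_pair hv hw hwx hwy, ← hf]
  push_cast
  ring

/-- Beltrami identity for the conjugate pair, form (ii). With
`f = ∂ₓv(z) - i·∂_yv(z) ≠ 0`, if at `z` one has `∂ₓw = -A(z)|f|^{p-2}·∂_yv` and
`∂_yw = A(z)|f|^{p-2}·∂ₓv`, then for `F = v + iw`:
`f·(1 + A(z)|f|^{p-2})·∂F/∂z̄ = (1 - A(z)|f|^{p-2})·conj(f)·∂F/∂z`. -/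
theorem beltrami_identity_ii (p : ℝ) (hp : 1 < p)
    (Ω : Set ℂ) (hΩ : IsOpen Ω) (A : ℂ → ℝ) (v w : ℂ → ℝ) (z : ℂ) (hz : z ∈ Ω)
    (hv : DifferentiableAt ℝ v z) (hw : DifferentiableAt ℝ w z)
    (f : ℂ)
    (hf : f = ((fderiv ℝ v z 1 : ℝ) : ℂ) - ((fderiv ℝ v z Complex.I : ℝ) : ℂ) * Complex.I)
    (hf0 : f ≠ 0)
    (hwx : fderiv ℝ w z 1 = -(A z * ‖f‖ ^ (p - 2) * fderiv ℝ v z Complex.I))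
    (hwy : fderiv ℝ w z Complex.I = A z * ‖f‖ ^ (p - 2) * fderiv ℝ v z 1) :
    let F : ℂ → ℂ := fun ζ => (v ζ : ℂ) + (w ζ : ℂ) * Complex.I
    let Fz : ℂ := (1 / 2) * (fderiv ℝ F z 1 - Complex.I * fderiv ℝ F z Complex.I)
    let Fzbar : ℂ := (1 / 2) * (fderiv ℝ F z 1 + Complex.I * fderiv ℝ F z Complex.I)
    f * ((1 + A z * ‖f‖ ^ (p - 2) : ℝ) : ℂ) * Fzbar
      = ((1 - A z * ‖f‖ ^ (p - 2) : ℝ) : ℂ) * (starRingEnd ℂ) f * Fz :=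
  beltrami_identity_ii_general p A v w z hv hw f hf hwx hwy
end
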